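/- Discrete a priori bound for the first-order IMEX scheme: let E be C¹ with global bounds K₀, K_t, K_x, let ε, Δt > 0, and let (xⁿ, vⁿ) satisfy (xⁿ⁺¹ − xⁿ)/Δt = vⁿ⁺¹/ε and ε(vⁿ⁺¹ − vⁿ)/Δt = E(tₙ, xⁿ) − (vⁿ⁺¹)^⊥/ε with tₙ = nΔt. Define zⁿ := vⁿ + ε E^⊥(t_{n−1}, x^{n−1}) for n ≥ 1. Then ‖v¹‖ ≤ ‖v⁰‖ + ε K₀, and for all n ≥ 1, ‖zⁿ‖ ≤ e^{K_x tₙ}(‖v⁰‖ + 2εK₀) + ε tₙ e^{K_x tₙ}(K_t + K_x K₀) and ‖vⁿ‖ ≤ ‖zⁿ‖ + K₀ ε. -/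

import Mathlib

/-!
With `λ = Δt/ε²` the implicit velocity update reads `vⁿ⁺¹ + λ (vⁿ⁺¹)^⊥ = vⁿ + λ ε E(tₙ, xⁿ)`,
and `‖w + λ w^⊥‖ = √(1 + λ²) ‖w‖ ≥ ‖w‖`: the stiff rotation never amplifies. The forcing
`λ ε E` is `O(Δt/ε)`, but after the shift `zⁿ⁺¹ = vⁿ⁺¹ + ε E^⊥(tₙ, xⁿ)` it cancels (because
`(w^⊥)^⊥ = -w`), leaving `zⁿ⁺² + λ (zⁿ⁺²)^⊥ = zⁿ⁺¹ + ε (E(tₙ₊₁, xⁿ⁺¹) − E(tₙ, xⁿ))^⊥`.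
Since `xⁿ⁺¹ − xⁿ = (Δt/ε) vⁿ⁺¹`, the increment of `E` is at most `K_t Δt + K_x (Δt/ε) ‖vⁿ⁺¹‖`,
whence `‖zⁿ⁺²‖ ≤ (1 + K_x Δt) ‖zⁿ⁺¹‖ + ε Δt (K_t + K_x K₀)`, and the discrete Grönwall
inequality concludes.
-/

/-- Rotation by π/2 on Euclidean `ℝ²`: `(a,b)^⊥ = (−b,a)`. -/
noncomputable def perp (v : EuclideanSpace ℝ (Fin 2)) : EuclideanSpace ℝ (Fin 2) :=
  WithLp.toLp 2 ![-(v 1), v 0]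

open Real

local notation "ℝ²" => EuclideanSpace ℝ (Fin 2)

lemma perp_add (a b : ℝ²) : perp (a + b) = perp a + perp b := by
  ext i; fin_cases i <;> simp [perp]
  ring

lemma perp_smul (c : ℝ) (a : ℝ²) : perp (c • a) = c • perp a := by
  ext i; fin_cases i <;> simp [perp]

lemma perp_sub (a b : ℝ²) : perp (a - b) = perp a - perp b := by
  ext i; fin_cases i <;> simp [perp]
  ring

lemma perp_perp (a : ℝ²) : perp (perp a) = -a := by
  ext i; fin_cases i <;> simp [perp]

lemma norm_perp (a : ℝ²) : ‖perp a‖ = ‖a‖ := by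
  simp only [EuclideanSpace.norm_eq, perp, Fin.sum_univ_two]
  simp [add_comm]

lemma norm_add_smul_perp (c : ℝ) (w : ℝ²) : ‖w + c • perp w‖ = √(1 + c ^ 2) * ‖w‖ := by
  rw [EuclideanSpace.norm_eq, EuclideanSpace.norm_eq, ← sqrt_mul (by positivity)]
  congr 1
  simp [perp, Fin.sum_univ_two]
  ring

lemma norm_smul_perp_le {ε K : ℝ} (hε : 0 ≤ ε) {e : ℝ²} (he : ‖e‖ ≤ K) : ‖ε • perp e‖ ≤ ε * K := by
  rw [norm_smul, norm_perp, norm_of_nonneg hε]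
  exact mul_le_mul_of_nonneg_left he hε

lemma norm_le_norm_add_smul_perp_add {ε K : ℝ} (hε : 0 ≤ ε) (v : ℝ²) {e : ℝ²} (he : ‖e‖ ≤ K) :
    ‖v‖ ≤ ‖v + ε • perp e‖ + ε * K :=
  (norm_le_add_norm_add v _).trans (by gcongr; exact norm_smul_perp_le hε he)

lemma norm_le_of_add_smul_perp_eq {c : ℝ} {w u : ℝ²} (h : w + c • perp w = u) : ‖w‖ ≤ ‖u‖ := by
  rw [← h, norm_add_smul_perp]
  exact le_mul_of_one_le_left (norm_nonneg w) (one_le_sqrt.2 (by nlinarith [sq_nonneg c]))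

lemma norm_le_add_of_add_smul_perp_eq {c : ℝ} {w a b : ℝ²} (h : w + c • perp w = a + c • b) :
    ‖w‖ ≤ ‖a‖ + ‖b‖ := by
  have hs : 1 ≤ √(1 + c ^ 2) := one_le_sqrt.2 (by nlinarith [sq_nonneg c])
  have hc : |c| ≤ √(1 + c ^ 2) := abs_le_sqrt (by linarith)
  refine le_of_mul_le_mul_left ?_ (zero_lt_one.trans_le hs)
  calc √(1 + c ^ 2) * ‖w‖ = ‖a + c • b‖ := by rw [← h, norm_add_smul_perp]
    _ ≤ ‖a‖ + |c| * ‖b‖ := (norm_add_le _ _).trans_eq (by rw [norm_smul, norm_eq_abs])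
    _ ≤ √(1 + c ^ 2) * (‖a‖ + ‖b‖) := by nlinarith [norm_nonneg a, norm_nonneg b]

lemma imex_position_step {V : Type*} [AddCommGroup V] [Module ℝ V] {ε Δt : ℝ} (hΔt : Δt ≠ 0)
    {x x' v' : V} (h : Δt⁻¹ • (x' - x) = ε⁻¹ • v') : x' - x = (Δt / ε) • v' := by
  rw [div_eq_mul_inv, mul_smul, ← h, smul_inv_smul₀ hΔt]

lemma imex_velocity_step {V : Type*} [AddCommGroup V] [Module ℝ V] {ε Δt : ℝ} (hε : ε ≠ 0)
    (hΔt : Δt ≠ 0) {e p v v' : V} (h : ε • (Δt⁻¹ • (v' - v)) = e - ε⁻¹ • p) :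
    v' + (Δt / ε ^ 2) • p = v + (Δt / ε ^ 2) • (ε • e) := by
  have hdiff : v' - v = (Δt / ε) • (e - ε⁻¹ • p) := by
    rw [← h, smul_smul, smul_smul]
    field_simp
    rw [one_smul]
  linear_combination (norm := skip) hdiff
  rw [smul_sub, smul_smul, smul_smul]
  field_simp
  module

lemma corrected_velocity_step {c ε : ℝ} {v v' e e' : ℝ²} (h : v' + c • perp v' = v + c • (ε • e')) :
    (v' + ε • perp e') + c • perp (v' + ε • perp e') = (v + ε • perp e) + ε • perp (e' - e) := by
  rw [perp_add, perp_smul, perp_perp, perp_sub]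
  linear_combination (norm := module) h

lemma norm_sub_le_add_of_lipschitz {X F : Type*} [SeminormedAddCommGroup X]
    [SeminormedAddCommGroup F] {E : ℝ → X → F} {Kt Kx : ℝ}
    (hKt : ∀ s t x, ‖E t x - E s x‖ ≤ Kt * |t - s|) (hKx : ∀ t x y, ‖E t x - E t y‖ ≤ Kx * ‖x - y‖)
    (s t : ℝ) (x y : X) : ‖E t y - E s x‖ ≤ Kt * |t - s| + Kx * ‖y - x‖ :=
  calc ‖E t y - E s x‖ = ‖(E t y - E t x) + (E t x - E s x)‖ := by rw [sub_add_sub_cancel]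
    _ ≤ _ := (norm_add_le _ _).trans (by linarith [hKx t y x, hKt s t x])

lemma nonneg_of_norm_sub_le_mul_norm {X F : Type*} [NormedAddCommGroup X] [Nontrivial X]
    [SeminormedAddCommGroup F] {f : X → F} {K : ℝ} (h : ∀ x y, ‖f x - f y‖ ≤ K * ‖x - y‖) :
    0 ≤ K := by
  obtain ⟨x, hx⟩ := exists_ne (0 : X)
  have hfx := h x 0
  rw [sub_zero] at hfx
  exact nonneg_of_mul_nonneg_left ((norm_nonneg _).trans hfx) (norm_pos_iff.2 hx)

lemma le_exp_mul_add_of_le_one_add_mul {u : ℕ → ℝ} {K h B : ℝ} (hK : 0 ≤ K) (hh : 0 ≤ h)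
    (hB : 0 ≤ B) (hu₀ : 0 ≤ u 0) (hu : ∀ n, u (n + 1) ≤ (1 + K * h) * u n + h * B) (n : ℕ) :
    u n ≤ exp (K * (n * h)) * (u 0 + n * h * B) := by
  have := discrete_gronwall (c := fun _ ↦ K * h) (b := fun _ ↦ h * B) hu₀ (fun n _ ↦ hu n)
    (fun _ _ ↦ by positivity) (fun _ _ ↦ by positivity) (Nat.zero_le n)
  simp only [Finset.sum_const, Nat.card_Ico, nsmul_eq_mul, Nat.sub_zero] at this
  exact this.trans_eq (by ring_nf)

lemma norm_corrected_velocity_succ_le {E : ℝ → ℝ² → ℝ²} {K₀ Kt Kx ε Δt : ℝ} (hε : 0 < ε)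
    (hΔt : 0 < Δt) (hKx0 : 0 ≤ Kx) (hK₀ : ∀ t x, ‖E t x‖ ≤ K₀)
    (hKt : ∀ s t x, ‖E t x - E s x‖ ≤ Kt * |t - s|) (hKx : ∀ t x y, ‖E t x - E t y‖ ≤ Kx * ‖x - y‖)
    {t t' : ℝ} (ht : t' = t + Δt) {x x' v v' : ℝ²} (hx : x' - x = (Δt / ε) • v)
    (hv : v' + (Δt / ε ^ 2) • perp v' = v + (Δt / ε ^ 2) • (ε • E t' x')) :
    ‖v' + ε • perp (E t' x')‖
      ≤ (1 + Kx * Δt) * ‖v + ε • perp (E t x)‖ + Δt * (ε * (Kt + Kx * K₀)) := by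
  subst ht
  set z := v + ε • perp (E t x)
  have hv_le : ‖v‖ ≤ ‖z‖ + ε * K₀ := norm_le_norm_add_smul_perp_add hε.le v (hK₀ t x)
  have hE_inc : ‖E (t + Δt) x' - E t x‖ ≤ Kt * Δt + Kx * (Δt / ε * ‖v‖) := by
    have := norm_sub_le_add_of_lipschitz hKt hKx t (t + Δt) x x'
    rwa [add_sub_cancel_left, abs_of_pos hΔt, hx, norm_smul, norm_of_nonneg (by positivity)]
      at this
  calc ‖v' + ε • perp (E (t + Δt) x')‖ ≤ ‖z + ε • perp (E (t + Δt) x' - E t x)‖ :=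
        norm_le_of_add_smul_perp_eq (corrected_velocity_step hv)
    _ ≤ ‖z‖ + ε * (Kt * Δt + Kx * (Δt / ε * (‖z‖ + ε * K₀))) := by
        refine (norm_add_le _ _).trans ?_
        gcongr
        exact norm_smul_perp_le hε.le (hE_inc.trans (by gcongr))
    _ = (1 + Kx * Δt) * ‖z‖ + Δt * (ε * (Kt + Kx * K₀)) := by
        field_simp
        ring

/-- discrete a priori bound for the first-order IMEX scheme. -/
theorem stmt15 (K₀ Kt Kx ε Δt : ℝ) (hε : 0 < ε) (hΔt : 0 < Δt)
    (E : ℝ → EuclideanSpace ℝ (Fin 2) → EuclideanSpace ℝ (Fin 2))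
    (hK₀ : ∀ t x, ‖E t x‖ ≤ K₀)
    (hKt : ∀ s t x, ‖E t x - E s x‖ ≤ Kt * |t - s|)
    (hKx : ∀ t x y, ‖E t x - E t y‖ ≤ Kx * ‖x - y‖)
    (x v : ℕ → EuclideanSpace ℝ (Fin 2))
    (hx : ∀ n : ℕ, Δt⁻¹ • (x (n + 1) - x n) = ε⁻¹ • v (n + 1))
    (hv : ∀ n : ℕ, ε • (Δt⁻¹ • (v (n + 1) - v n))
        = E ((n : ℝ) * Δt) (x n) - ε⁻¹ • perp (v (n + 1)))
    (z : ℕ → EuclideanSpace ℝ (Fin 2))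
    (hz : ∀ n : ℕ, z (n + 1) = v (n + 1) + ε • perp (E ((n : ℝ) * Δt) (x n))) :
    ‖v 1‖ ≤ ‖v 0‖ + ε * K₀ ∧
    ∀ n : ℕ, 1 ≤ n →
      (‖z n‖ ≤ Real.exp (Kx * ((n : ℝ) * Δt)) * (‖v 0‖ + 2 * ε * K₀)
          + ε * ((n : ℝ) * Δt) * Real.exp (Kx * ((n : ℝ) * Δt)) * (Kt + Kx * K₀)) ∧
      ‖v n‖ ≤ ‖z n‖ + K₀ * ε := by
  have hK₀0 : 0 ≤ K₀ := (norm_nonneg _).trans (hK₀ 0 0)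
  have hKt0 : 0 ≤ Kt := nonneg_of_norm_sub_le_mul_norm (f := fun t ↦ E t 0) fun t s ↦ by
    simpa only [norm_eq_abs] using hKt s t 0
  have hKx0 : 0 ≤ Kx := nonneg_of_norm_sub_le_mul_norm (hKx 0)
  have hstep n := imex_velocity_step hε.ne' hΔt.ne' (hv n)
  have hv1 : ‖v 1‖ ≤ ‖v 0‖ + ε * K₀ := by
    refine (norm_le_add_of_add_smul_perp_eq (hstep 0)).trans ?_
    rw [norm_smul, norm_of_nonneg hε.le]
    gcongr
    exact hK₀ _ _
  have hz_succ n : ‖z (n + 2)‖ ≤ (1 + Kx * Δt) * ‖z (n + 1)‖ + Δt * (ε * (Kt + Kx * K₀)) := by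
    rw [hz, hz]
    exact norm_corrected_velocity_succ_le hε hΔt hKx0 hK₀ hKt hKx (by push_cast; ring)
      (imex_position_step hΔt.ne' (hx n)) (hstep (n + 1))
  refine ⟨hv1, fun n hn ↦ ?_⟩
  obtain ⟨m, rfl⟩ := Nat.exists_eq_add_of_le' hn
  have hz1 : ‖z 1‖ ≤ ‖v 0‖ + 2 * ε * K₀ := by
    rw [hz, zero_add]
    refine (norm_add_le _ _).trans ?_
    linarith [norm_smul_perp_le hε.le (hK₀ ((0 : ℕ) * Δt) (x 0))]
  refine ⟨?_, ?_⟩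
  · calc ‖z (m + 1)‖ ≤ exp (Kx * (m * Δt)) * (‖z 1‖ + m * Δt * (ε * (Kt + Kx * K₀))) :=
          le_exp_mul_add_of_le_one_add_mul (u := fun m ↦ ‖z (m + 1)‖) hKx0 hΔt.le (by positivity)
            (norm_nonneg _) hz_succ m
      _ ≤ exp (Kx * ((m + 1) * Δt))
            * (‖v 0‖ + 2 * ε * K₀ + (m + 1) * Δt * (ε * (Kt + Kx * K₀))) := by
          gcongr <;> linarith
      _ = _ := by push_cast; ring
  · rw [mul_comm K₀, hz]
    exact norm_le_norm_add_smul_perp_add hε.le _ (hK₀ _ _)
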